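/- Let k be a positive integer and m a non-negative integer. Let K be the set of all odd integers in the closed interval [1, 6k−1], and let T = ⋃_{j=0}^{m} 5^j·K, where 5^j·K = {5^j·u : u ∈ K}. Then the cardinality of T equals 3k(m+1) − m·⌊(3k+2)/5⌋. -/
import Mathlib

private def Kset (k : ℕ) : Finset ℕ := (Finset.Icc 1 (6 * k - 1)).filter fun u => Odd u

private def Tset (k m : ℕ) : Finset ℕ :=
  (Finset.range (m + 1)).biUnion fun j => (Kset k).image fun u => 5 ^ j * u

private lemma mem_Kset {k u : ℕ} : u ∈ Kset k ↔ (1 ≤ u ∧ u ≤ 6 * k - 1) ∧ u % 2 = 1 := by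
  simp [Kset, Nat.odd_iff, and_assoc]

private lemma Kset_card (k : ℕ) (hk : 1 ≤ k) : (Kset k).card = 3 * k := by
  have h : Kset k = (Finset.range (3 * k)).image fun i => 2 * i + 1 := by
    ext x
    simp only [mem_Kset, Finset.mem_image, Finset.mem_range]
    constructor
    · rintro ⟨⟨h1, h2⟩, h3⟩
      exact ⟨x / 2, by omega, by omega⟩
    · rintro ⟨i, hi, rfl⟩
      omega
  rw [h, Finset.card_image_of_injective _ (fun a b h => by omega), Finset.card_range]

private lemma c_card (k : ℕ) (hk : 1 ≤ k) :
    ((Kset k).filter fun u => 5 * u ≤ 6 * k - 1).card = (3 * k + 2) / 5 := by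
  have h : ((Kset k).filter fun u => 5 * u ≤ 6 * k - 1)
      = (Finset.range ((3 * k + 2) / 5)).image fun i => 2 * i + 1 := by
    ext x
    simp only [Finset.mem_filter, mem_Kset, Finset.mem_image, Finset.mem_range]
    constructor
    · rintro ⟨⟨⟨h1, h2⟩, h3⟩, h4⟩
      exact ⟨x / 2, by omega, by omega⟩
    · rintro ⟨i, hi, rfl⟩
      omega
  rw [h, Finset.card_image_of_injective _ (fun a b h => by omega), Finset.card_range]

private lemma Tstep (k m : ℕ) (hk : 1 ≤ k) :
    (Tset k (m + 1)).card = (Tset k m).card + (3 * k - (3 * k + 2) / 5) := by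
  have hinj : Function.Injective (fun u => 5 ^ (m + 1) * u : ℕ → ℕ) := fun a b h => by
    exact Nat.eq_of_mul_eq_mul_left (pow_pos (by norm_num) _) h
  have hsplit : Tset k (m + 1) = Tset k m ∪ (Kset k).image (fun u => 5 ^ (m + 1) * u) := by
    rw [Tset, Finset.range_add_one, Finset.biUnion_insert]
    rw [Finset.union_comm]
    rfl
  have hdiff : ((Kset k).image (fun u => 5 ^ (m + 1) * u)) \ Tset k m
      = ((Kset k).filter fun u => ¬ (5 * u ≤ 6 * k - 1)).image fun u => 5 ^ (m + 1) * u := by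
    ext x
    simp only [Finset.mem_sdiff, Finset.mem_image, Tset, Finset.mem_biUnion, Finset.mem_range,
      Finset.mem_filter, not_exists]
    constructor
    · rintro ⟨⟨u, hu, rfl⟩, hnot⟩
      refine ⟨u, ⟨hu, fun h5 => ?_⟩, rfl⟩
      have hu' := mem_Kset.mp hu
      have hodd : 5 * u % 2 = 1 := by omega
      have h5u : 5 * u ∈ Kset k := mem_Kset.mpr ⟨⟨by omega, h5⟩, hodd⟩
      exact hnot m ⟨by omega, 5 * u, h5u, by ring⟩
    · rintro ⟨u, ⟨hu, h5⟩, rfl⟩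
      refine ⟨⟨u, hu, rfl⟩, fun j hj => ?_⟩
      obtain ⟨hjm, v, hv, hvx⟩ := hj
      have hu' := mem_Kset.mp hu
      have hv' := mem_Kset.mp hv
      have hle : m + 1 - j ≥ 1 := by omega
      have hpow : (5 : ℕ) ^ (m + 1) = 5 ^ j * 5 ^ (m + 1 - j) := by
        rw [← pow_add]; congr 1; omega
      have hveq : v = 5 ^ (m + 1 - j) * u := by
        have : 5 ^ j * v = 5 ^ j * (5 ^ (m + 1 - j) * u) := by
          rw [hvx, hpow]; ring
        exact Nat.eq_of_mul_eq_mul_left (pow_pos (by norm_num) _) this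
      have h5le : (5 : ℕ) ≤ 5 ^ (m + 1 - j) := by
        calc (5 : ℕ) = 5 ^ 1 := (pow_one 5).symm
        _ ≤ 5 ^ (m + 1 - j) := Nat.pow_le_pow_right (by norm_num) hle
      have : 5 * u ≤ v := by
        rw [hveq]; exact Nat.mul_le_mul_right u h5le
      omega
  have hcard := Finset.card_sdiff_add_card ((Kset k).image (fun u => 5 ^ (m + 1) * u)) (Tset k m)
  rw [Finset.union_comm] at hcard
  rw [hsplit, ← hcard, hdiff, Finset.card_image_of_injective _ hinj]
  have hfilt := Finset.card_filter_add_card_filter_not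
      (s := Kset k) (p := fun u => 5 * u ≤ 6 * k - 1)
  rw [Kset_card k hk, c_card k hk] at hfilt
  omega

private lemma Tcard (k m : ℕ) (hk : 1 ≤ k) :
    (Tset k m).card = 3 * k * (m + 1) - m * ((3 * k + 2) / 5) := by
  induction m with
  | zero =>
      simp only [Tset, Finset.range_one, Finset.biUnion_singleton, pow_zero, one_mul]
      simp [Finset.image_id', Kset_card k hk]
  | succ n ih =>
      rw [Tstep k n hk, ih]
      set c := (3 * k + 2) / 5 with hc
      have hcle : c ≤ 3 * k := by omega
      have h2 : n * c ≤ 3 * k * n := by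
        calc n * c ≤ n * (3 * k) := Nat.mul_le_mul le_rfl hcle
        _ = 3 * k * n := by ring
      have e1 : 3 * k * (n + 1 + 1) = 3 * k * n + 3 * k + 3 * k := by ring
      have e2 : (n + 1) * c = n * c + c := by ring
      have e3 : 3 * k * (n + 1) = 3 * k * n + 3 * k := by ring
      rw [e1, e2, e3]
      generalize 3 * k * n = p at h2 ⊢
      generalize n * c = q at h2 ⊢
      omega

/-- Let `K` be the set of odd integers in `[1, 6k−1]` and `T = ⋃_{j=0}^m 5^j·K`.
Then `|T| = 3k(m+1) − m·⌊(3k+2)/5⌋`. -/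
theorem stmt10 (k m : ℕ) (hk : 1 ≤ k) :
    ((Finset.range (m + 1)).biUnion fun j =>
        ((Finset.Icc 1 (6 * k - 1)).filter fun u => Odd u).image fun u => 5 ^ j * u).card =
      3 * k * (m + 1) - m * ((3 * k + 2) / 5) := by
  exact Tcard k m hk
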